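/- arXiv:2402.11387 — 4 statements merged into one kernel-verified Lean document; each statement's English description precedes it below -/
import Mathlib

section
/- Let H be a graph with at least one edge, and let k0 denote the minimum over all edges uv of H of max{d_H(u), d_H(v)} − 1. Then in any H-saturated graph G, the set of vertices of G whose degree is strictly less than k0 forms a clique (every two distinct such vertices are adjacent in G). -/
open SimpleGraph

/-- `G` contains a subgraph isomorphic to `H`. -/
def ContainsCopy {α β : Type*} (G : SimpleGraph α) (H : SimpleGraph β) : Prop :=
  ∃ f : β → α, Function.Injective f ∧ ∀ ⦃u v : β⦄, H.Adj u v → G.Adj (f u) (f v)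

/-- `G` is `H`-saturated: `G` is `H`-free but adding any edge creates a copy of `H`. -/
def IsSat {α β : Type*} (G : SimpleGraph α) (H : SimpleGraph β) : Prop :=
  ¬ ContainsCopy G H ∧
    ∀ x y : α, x ≠ y → ¬ G.Adj x y →
      ContainsCopy (G ⊔ SimpleGraph.fromEdgeSet {s(x, y)}) H

/-- The degree of a vertex. -/
noncomputable def deg {α : Type*} (G : SimpleGraph α) (v : α) : ℕ :=
  (G.neighborSet v).ncard

/-- `wt0 uv = max (d u) (d v) - 1`. -/
noncomputable def wt0 {β : Type*} (H : SimpleGraph β) (u v : β) : ℕ :=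
  max (deg H u) (deg H v) - 1

/-- The neighborhood of the edge `uv`: `(N(u) - v) ∪ (N(v) - u)`. -/
def edgeNbhd {β : Type*} (H : SimpleGraph β) (u v : β) : Set β :=
  (H.neighborSet u \ {v}) ∪ (H.neighborSet v \ {u})

/-- `wt1 uv`: the maximum degree of a vertex in the neighborhood of the edge `uv`. -/
noncomputable def wt1 {β : Type*} (H : SimpleGraph β) (u v : β) : ℕ :=
  sSup (deg H '' edgeNbhd H u v)

/-- `k0`: the minimum of `wt0` over the edges of `H`. -/
noncomputable def paramK0 {β : Type*} (H : SimpleGraph β) : ℕ :=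
  sInf {k | ∃ u v, H.Adj u v ∧ wt0 H u v = k}

/-- `k1`: the minimum of `wt1` over the edges of `H`. -/
noncomputable def paramK1 {β : Type*} (H : SimpleGraph β) : ℕ :=
  sInf {k | ∃ u v, H.Adj u v ∧ wt1 H u v = k}

/-- `k1'`: the minimum of `wt1` over the edges of `H` minimizing `wt0`. -/
noncomputable def paramK1p {β : Type*} (H : SimpleGraph β) : ℕ :=
  sInf {k | ∃ u v, H.Adj u v ∧ wt0 H u v = paramK0 H ∧ wt1 H u v = k}

/-- `k0'`: the minimum of `wt0` over the edges of `H` minimizing `wt1`. -/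
noncomputable def paramK0p {β : Type*} (H : SimpleGraph β) : ℕ :=
  sInf {k | ∃ u v, H.Adj u v ∧ wt1 H u v = paramK1 H ∧ wt0 H u v = k}

/-!
If `x, y` are non-adjacent in an `H`-saturated graph `G`, a copy of `H` in `G + xy` must map some
edge `uv` of `H` onto `xy`. Then `d_H(u) ≤ d_G(x) + 1` and `d_H(v) ≤ d_G(y) + 1`, so if both `x`
and `y` have degree `< k0` we get `wt0(uv) < k0`, contradicting the minimality of `k0`.
-/

section

variable {α β : Type*} {G : SimpleGraph α} {H : SimpleGraph β}

lemma deg_le_deg_of_injective_of_adj [Finite α] {f : β → α} (hf : Function.Injective f)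
    (hmap : ∀ ⦃u v : β⦄, H.Adj u v → G.Adj (f u) (f v)) (u : β) :
    deg H u ≤ deg G (f u) := by
  have hsub : f '' H.neighborSet u ⊆ G.neighborSet (f u) := by
    rintro _ ⟨w, hw, rfl⟩
    exact hmap hw
  calc deg H u = (f '' H.neighborSet u).ncard := (Set.ncard_image_of_injective _ hf).symm
    _ ≤ deg G (f u) := Set.ncard_le_ncard hsub

lemma deg_sup_edge_left_le [Finite α] (G : SimpleGraph α) (x y : α) :
    deg (G ⊔ edge x y) x ≤ deg G x + 1 := by
  have hsub : (G ⊔ edge x y).neighborSet x ⊆ insert y (G.neighborSet x) := by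
    intro z hz
    rcases hz with hz | hz
    · exact Or.inr hz
    · rw [edge_adj] at hz
      exact Or.inl (by grind)
  exact (Set.ncard_le_ncard hsub).trans (Set.ncard_insert_le _ _)

lemma deg_sup_edge_right_le [Finite α] (G : SimpleGraph α) (x y : α) :
    deg (G ⊔ edge x y) y ≤ deg G y + 1 :=
  edge_comm x y ▸ deg_sup_edge_left_le G y x

lemma exists_adj_map_eq_of_sup_edge (hfree : ¬ ContainsCopy G H) {x y : α} {f : β → α}
    (hf : Function.Injective f) (hmap : ∀ ⦃u v : β⦄, H.Adj u v → (G ⊔ edge x y).Adj (f u) (f v)) :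
    ∃ u v, H.Adj u v ∧ f u = x ∧ f v = y := by
  by_contra! hxy
  refine hfree ⟨f, hf, fun u v huv => ?_⟩
  rcases hmap huv with h | h
  · exact h
  · rw [edge_adj] at h
    rcases h with ⟨⟨hu, hv⟩ | ⟨hu, hv⟩, -⟩
    · exact absurd hv (hxy u v huv hu)
    · exact absurd hu (hxy v u huv.symm hv)

lemma paramK0_le_wt0 {u v : β} (huv : H.Adj u v) : paramK0 H ≤ wt0 H u v :=
  Nat.sInf_le ⟨u, v, huv, rfl⟩

end

theorem stmt0_general {α β : Type*} [Fintype α] (H : SimpleGraph β)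
    (G : SimpleGraph α) (hG : IsSat G H) :
    ∀ x y : α, deg G x < paramK0 H → deg G y < paramK0 H → x ≠ y → G.Adj x y := by
  intro x y hx hy hxy
  by_contra hadj
  obtain ⟨f, hf, hmap⟩ := hG.2 x y hxy hadj
  obtain ⟨u, v, huv, rfl, rfl⟩ := exists_adj_map_eq_of_sup_edge hG.1 hf hmap
  have hu : deg H u ≤ deg G (f u) + 1 :=
    (deg_le_deg_of_injective_of_adj hf hmap u).trans (deg_sup_edge_left_le G (f u) (f v))
  have hv : deg H v ≤ deg G (f v) + 1 :=
    (deg_le_deg_of_injective_of_adj hf hmap v).trans (deg_sup_edge_right_le G (f u) (f v))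
  have hk0 : paramK0 H ≤ max (deg H u) (deg H v) - 1 := paramK0_le_wt0 huv
  omega

/-- Prop. (low degree clique): in an `H`-saturated graph, the vertices of degree `< k0`
form a clique. -/
theorem stmt0 {α β : Type*} [Fintype α] [Fintype β] (H : SimpleGraph β)
    (hedge : ∃ u v, H.Adj u v)
    (G : SimpleGraph α) (hG : IsSat G H) :
    ∀ x y : α, deg G x < paramK0 H → deg G y < paramK0 H → x ≠ y → G.Adj x y :=
  stmt0_general H G hG
end

section
/- Let H be a graph with at least one edge and no isolated edges, and let k1 denote the minimum over all edges uv of H of the maximum degree of a vertex in the edge neighborhood N_H(uv). Then in any H-saturated graph G, the set of vertices of G having no neighbor of degree at least k1 forms a clique. -/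
open SimpleGraph

/-!
Suppose `x` and `y` are nonadjacent and neither has a neighbor of degree at least `k1`. Since `G`
is `H`-free, every copy `f` of `H` in `G + xy` maps some edge `ab` of `H` onto the new edge
`xy`. A vertex `w` of `N_H(ab)` of maximal degree has `d_H(w) = wt1(ab) ≥ k1`, and all edges of
`H` at `w` land in `G` because `f w ∉ {x, y}`. Hence `f w` is a neighbor of `x` or `y` in `G` of
degree at least `k1`, a contradiction.
-/

/-- In the unbounded case this holds because `sSup` of an unbounded set of naturals is `0`. -/
lemma Nat.exists_mem_sSup_image_le {ι : Type*} {s : Set ι} (hs : s.Nonempty) (g : ι → ℕ) :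
    ∃ i ∈ s, sSup (g '' s) ≤ g i := by
  by_cases hbdd : BddAbove (g '' s)
  · obtain ⟨i, hi, hgi⟩ := Nat.sSup_mem (hs.image g) hbdd
    exact ⟨i, hi, hgi.ge⟩
  · obtain ⟨i, hi⟩ := hs
    exact ⟨i, hi, by simp [Nat.sSup_of_not_bddAbove hbdd]⟩

namespace SimpleGraph

variable {α β : Type*}

lemma adj_of_sup_edge_adj {G : SimpleGraph α} {x y p q : α} (h : (G ⊔ edge x y).Adj p q)
    (hpx : p ≠ x) (hpy : p ≠ y) : G.Adj p q := by
  rcases h with h | h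
  · exact h
  · rw [edge_adj] at h
    tauto

lemma exists_adj_map_eq_of_not_containsCopy {G : SimpleGraph α} {H : SimpleGraph β} {x y : α}
    {f : β → α} (hG : ¬ ContainsCopy G H) (hf : Function.Injective f)
    (hfadj : ∀ ⦃u v : β⦄, H.Adj u v → (G ⊔ edge x y).Adj (f u) (f v)) :
    ∃ a b, H.Adj a b ∧ f a = x ∧ f b = y := by
  obtain ⟨a, b, hab, hnew⟩ : ∃ a b, H.Adj a b ∧ ¬ G.Adj (f a) (f b) := by
    by_contra! h
    exact hG ⟨f, hf, h⟩
  rcases hfadj hab with h | h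
  · exact absurd h hnew
  · rw [edge_adj] at h
    rcases h.1 with ⟨ha, hb⟩ | ⟨ha, hb⟩
    · exact ⟨a, b, hab, ha, hb⟩
    · exact ⟨b, a, hab.symm, hb, ha⟩

lemma deg_le_deg_of_adj_map [Finite α] {G : SimpleGraph α} {H : SimpleGraph β} {f : β → α}
    (hf : Function.Injective f) {w : β} (h : ∀ u, H.Adj w u → G.Adj (f w) (f u)) :
    deg H w ≤ deg G (f w) :=
  Set.ncard_le_ncard_of_injOn f h hf.injOn

lemma mem_edgeNbhd_iff {H : SimpleGraph β} {u v w : β} :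
    w ∈ edgeNbhd H u v ↔ (H.Adj u w ∨ H.Adj v w) ∧ w ≠ u ∧ w ≠ v := by
  simp only [edgeNbhd, Set.mem_union, Set.mem_sdiff, mem_neighborSet, Set.mem_singleton_iff]
  constructor
  · rintro (⟨h, hv⟩ | ⟨h, hu⟩)
    · exact ⟨.inl h, h.ne', hv⟩
    · exact ⟨.inr h, hu, h.ne'⟩
  · rintro ⟨h | h, hu, hv⟩
    · exact .inl ⟨h, hv⟩
    · exact .inr ⟨h, hu⟩

lemma paramK1_le_wt1 {H : SimpleGraph β} {u v : β} (huv : H.Adj u v) : paramK1 H ≤ wt1 H u v :=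
  Nat.sInf_le ⟨u, v, huv, rfl⟩

lemma exists_mem_edgeNbhd_paramK1_le_deg {H : SimpleGraph β} {u v : β} (huv : H.Adj u v)
    (hne : (edgeNbhd H u v).Nonempty) : ∃ w ∈ edgeNbhd H u v, paramK1 H ≤ deg H w := by
  obtain ⟨w, hw, hle⟩ := Nat.exists_mem_sSup_image_le hne (deg H)
  exact ⟨w, hw, (paramK1_le_wt1 huv).trans hle⟩

end SimpleGraph

theorem stmt1_general {α β : Type*} [Fintype α] (H : SimpleGraph β)
    (hiso : ∀ u v, H.Adj u v → (edgeNbhd H u v).Nonempty)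
    (G : SimpleGraph α) (hG : IsSat G H) :
    ∀ x y : α,
      (∀ w, G.Adj x w → deg G w < paramK1 H) →
      (∀ w, G.Adj y w → deg G w < paramK1 H) →
      x ≠ y → G.Adj x y := by
  intro x y hx hy hxy
  by_contra hnadj
  obtain ⟨f, hf, hfadj⟩ := hG.2 x y hxy hnadj
  obtain ⟨a, b, hab, rfl, rfl⟩ := exists_adj_map_eq_of_not_containsCopy hG.1 hf hfadj
  obtain ⟨w, hw, hk1⟩ := exists_mem_edgeNbhd_paramK1_le_deg hab (hiso a b hab)
  obtain ⟨hadj, hwa, hwb⟩ := mem_edgeNbhd_iff.1 hw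
  have hGw : ∀ u, H.Adj w u → G.Adj (f w) (f u) := fun u hu =>
    adj_of_sup_edge_adj (hfadj hu) (hf.ne hwa) (hf.ne hwb)
  have hdeg : deg H w ≤ deg G (f w) := deg_le_deg_of_adj_map hf hGw
  rcases hadj with ha | hb
  · exact (hx (f w) (hGw a ha.symm).symm).not_ge (hk1.trans hdeg)
  · exact (hy (f w) (hGw b hb.symm).symm).not_ge (hk1.trans hdeg)

/-- Prop. (neighbor clique, part 1): in an `H`-saturated graph, the vertices having no
neighbor of degree at least `k1` form a clique. -/
theorem stmt1 {α β : Type*} [Fintype α] [Fintype β] (H : SimpleGraph β)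
    (hedge : ∃ u v, H.Adj u v)
    (hiso : ∀ u v, H.Adj u v → (edgeNbhd H u v).Nonempty)
    (G : SimpleGraph α) (hG : IsSat G H) :
    ∀ x y : α,
      (∀ w, G.Adj x w → deg G w < paramK1 H) →
      (∀ w, G.Adj y w → deg G w < paramK1 H) →
      x ≠ y → G.Adj x y :=
  stmt1_general H hiso G hG
end

section
/- Let H be a graph with at least one edge and let k0 be the minimum over all edges uv of H of max{d_H(u), d_H(v)} − 1. Then for every integer n with n ≥ |H| (the number of vertices of H), every H-saturated graph on n vertices has at least k0·n/2 − (k0+1)²/8 edges; that is, sat(n, H) ≥ k0·n/2 − (k0+1)²/8. -/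
open SimpleGraph

/-!
In an `H`-saturated graph `G`, adding a missing edge `xy` creates a copy of `H` which must use
`xy`, say as the image of an edge `uv` of `H`. The other neighbours of `u` and `v` land in the
`G`-neighbourhoods of `x` and `y`, so `max (deg x) (deg y) ≥ wt0 uv ≥ k0`. Hence the vertices of
degree `< k0` form a clique; if there are `s` of them, the degree sum is at least
`k0 (n - s) + s (s - 1)`, and minimizing this quadratic over `s` gives `k0 n - (k0 + 1)² / 4`.
-/

open Finset

section Saturation

variable {α β : Type*} {G : SimpleGraph α} {H : SimpleGraph β}

lemma deg_eq_degree (G : SimpleGraph α) (v : α) [Fintype (G.neighborSet v)] :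
    deg G v = G.degree v := by
  rw [deg, ← Nat.card_coe_set_eq, Nat.card_eq_fintype_card, card_neighborSet_eq_degree]

lemma ContainsCopy.of_sup_edge {x y : α} {f : β → α} (hf : Function.Injective f)
    (hmap : ∀ ⦃a b : β⦄, H.Adj a b → (G ⊔ edge x y).Adj (f a) (f b))
    (hxy : ¬ ∃ u v, H.Adj u v ∧ f u = x ∧ f v = y) : ContainsCopy G H := by
  refine ⟨f, hf, fun a b hab => ?_⟩
  rcases hmap hab with h | h
  · exact h
  · rcases (edge_adj x y _ _).1 h with ⟨⟨ha, hb⟩ | ⟨ha, hb⟩, -⟩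
    · exact absurd ⟨a, b, hab, ha, hb⟩ hxy
    · exact absurd ⟨b, a, hab.symm, hb, ha⟩ hxy

lemma IsSat.exists_copy_through_edge (hG : IsSat G H) {x y : α} (hxy : x ≠ y)
    (hnadj : ¬ G.Adj x y) :
    ∃ f : β → α, Function.Injective f ∧
      (∀ ⦃a b : β⦄, H.Adj a b → (G ⊔ edge x y).Adj (f a) (f b)) ∧
      ∃ u v, H.Adj u v ∧ f u = x ∧ f v = y := by
  obtain ⟨f, hf, hmap⟩ := hG.2 x y hxy hnadj
  by_contra! hno
  exact hG.1 <| ContainsCopy.of_sup_edge hf hmap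
    fun ⟨u, v, huv, hu, hv⟩ => hno f hf hmap u v huv hu hv

lemma deg_sub_one_le_deg_of_map_sup_edge [Finite α] {x y : α} {f : β → α}
    (hf : Function.Injective f)
    (hmap : ∀ ⦃a b : β⦄, H.Adj a b → (G ⊔ edge x y).Adj (f a) (f b))
    {u v : β} (hu : f u = x) (hv : f v = y) :
    deg H u - 1 ≤ deg G x := by
  have himage : f '' (H.neighborSet u \ {v}) ⊆ G.neighborSet x := by
    rintro _ ⟨w, ⟨huw, hwv⟩, rfl⟩
    rcases hmap huw with h | h
    · rwa [hu] at h
    · -- the only new edge at `x` goes to `y = f v`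
      have hw : f w = y := by
        rcases (edge_adj x y _ _).1 h with ⟨⟨-, hwy⟩ | ⟨huy, hwx⟩, -⟩
        exacts [hwy, hwx.trans (hu.symm.trans huy)]
      exact absurd (hf (hw.trans hv.symm)) hwv
  calc deg H u - 1 ≤ (H.neighborSet u \ {v}).ncard := Set.pred_ncard_le_ncard_sdiff_singleton _ _
    _ = (f '' (H.neighborSet u \ {v})).ncard := (Set.ncard_image_of_injective _ hf).symm
    _ ≤ deg G x := Set.ncard_le_ncard himage

theorem IsSat.paramK0_le_max_deg [Finite α] (hG : IsSat G H) {x y : α} (hxy : x ≠ y)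
    (hnadj : ¬ G.Adj x y) : paramK0 H ≤ max (deg G x) (deg G y) := by
  obtain ⟨f, hf, hmap, u, v, huv, hu, hv⟩ := hG.exists_copy_through_edge hxy hnadj
  have hx := deg_sub_one_le_deg_of_map_sup_edge hf hmap hu hv
  have hy := deg_sub_one_le_deg_of_map_sup_edge hf (by rwa [edge_comm] at hmap) hv hu
  have hk : paramK0 H ≤ wt0 H u v := Nat.sInf_le ⟨u, v, huv, rfl⟩
  unfold wt0 at hk
  omega

end Saturation

-- `(k (n - s) + s (s - 1)) - (k n - (k + 1)² / 4) = (s - (k + 1) / 2)²`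
lemma sub_sq_div_four_le (k n s : ℕ) (hs : s ≤ n) :
    (k : ℝ) * n - ((k : ℝ) + 1) ^ 2 / 4 ≤ ((k * (n - s) + s * (s - 1) : ℕ) : ℝ) := by
  have hpred : ((s * (s - 1) : ℕ) : ℝ) = s * ((s : ℝ) - 1) := by
    rcases Nat.eq_zero_or_pos s with rfl | hpos
    · simp
    · push_cast [Nat.cast_sub hpos]; ring
  push_cast [Nat.cast_sub hs, hpred]
  nlinarith [sq_nonneg ((s : ℝ) - ((k : ℝ) + 1) / 2)]

namespace SimpleGraph

variable {α : Type*} [Fintype α] (G : SimpleGraph α) [DecidableRel G.Adj]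

lemma IsClique.card_sub_one_le_degree [DecidableEq α] {s : Finset α}
    (hs : G.IsClique (s : Set α)) {v : α} (hv : v ∈ s) : #s - 1 ≤ G.degree v := by
  rw [← card_erase_of_mem hv]
  refine card_le_card fun w hw => ?_
  rw [mem_neighborFinset]
  exact hs hv (mem_of_mem_erase hw) (ne_of_mem_erase hw).symm

variable {G} {k : ℕ}
  (hk : ∀ x y, x ≠ y → ¬ G.Adj x y → k ≤ max (G.degree x) (G.degree y))
include hk

lemma isClique_filter_degree_lt : G.IsClique (({v | G.degree v < k} : Finset α) : Set α) := by
  intro x hx y hy hxy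
  simp only [coe_filter, Set.mem_ofPred_eq] at hx hy
  by_contra hnadj
  have := hk x y hxy hnadj
  omega

lemma exists_add_mul_pred_le_two_mul_card_edgeFinset [DecidableEq α] :
    ∃ s ≤ Fintype.card α, k * (Fintype.card α - s) + s * (s - 1) ≤ 2 * #G.edgeFinset := by
  set L : Finset α := {v | G.degree v < k}
  refine ⟨#L, card_le_univ L, ?_⟩
  have hlow : #L * (#L - 1) ≤ ∑ v ∈ L, G.degree v := by
    simpa using sum_le_sum fun v hv => (isClique_filter_degree_lt hk).card_sub_one_le_degree G hv
  have hhigh : k * (Fintype.card α - #L) ≤ ∑ v ∈ Lᶜ, G.degree v := by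
    rw [← card_compl, mul_comm, ← smul_eq_mul, ← sum_const]
    exact sum_le_sum fun v hv => by simpa [L] using hv
  rw [← sum_degrees_eq_twice_card_edges, ← sum_add_sum_compl L]
  omega

theorem le_card_edgeFinset_of_max_degree_ge [DecidableEq α] :
    (k : ℝ) * Fintype.card α / 2 - ((k : ℝ) + 1) ^ 2 / 8 ≤ #G.edgeFinset := by
  obtain ⟨s, hs, hcount⟩ := exists_add_mul_pred_le_two_mul_card_edgeFinset hk
  have hquad := sub_sq_div_four_le k _ _ hs
  have hcount' : ((k * (Fintype.card α - s) + s * (s - 1) : ℕ) : ℝ) ≤ 2 * #G.edgeFinset := by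
    exact_mod_cast hcount
  linarith

end SimpleGraph

theorem stmt3_general {β : Type*} (H : SimpleGraph β)
    (n : ℕ)
    (G : SimpleGraph (Fin n)) (hG : IsSat G H) :
    (paramK0 H : ℝ) * n / 2 - ((paramK0 H : ℝ) + 1) ^ 2 / 8 ≤ (G.edgeSet.ncard : ℝ) := by
  classical
  have hk : ∀ x y, x ≠ y → ¬ G.Adj x y → paramK0 H ≤ max (G.degree x) (G.degree y) := by
    intro x y hxy hnadj
    simpa only [deg_eq_degree] using hG.paramK0_le_max_deg hxy hnadj
  have hE : G.edgeSet.ncard = #G.edgeFinset := by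
    rw [← coe_edgeFinset, Set.ncard_coe_finset]
  simpa [hE] using SimpleGraph.le_card_edgeFinset_of_max_degree_ge hk

/-- `sat(n, H) ≥ k0 * n / 2 - (k0 + 1)^2 / 8` for `n ≥ |H|`. -/
theorem stmt3 {β : Type*} [Fintype β] (H : SimpleGraph β)
    (hedge : ∃ u v, H.Adj u v)
    (n : ℕ) (hn : Fintype.card β ≤ n)
    (G : SimpleGraph (Fin n)) (hG : IsSat G H) :
    (paramK0 H : ℝ) * n / 2 - ((paramK0 H : ℝ) + 1) ^ 2 / 8 ≤ (G.edgeSet.ncard : ℝ) :=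
  stmt3_general H n G hG
end

section
/- Let s and t be positive integers with s < t, let q = max{1, ⌊s/2⌋ − 1}, and let n be an integer with n ≥ q(2t + 4) + s. Then sat(n, S_{s,t}) ≥ (s(t + 1)/(t + 2))·n/2 − c1, where c1 = s(t − s + 2)/(2t + 4) + s²/8. -/
open SimpleGraph

/-- The double star `S_{s,t}` (for `1 ≤ s ≤ t`) on `s + t` vertices: vertex `0` is the
center of degree `s` (adjacent to `1, ..., s`), vertex `s` is the center of degree `t`
(adjacent to `0` and to `s + 1, ..., s + t - 1`). -/
def doubleStar (s t : ℕ) : SimpleGraph (Fin (s + t)) :=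
  SimpleGraph.fromRel (fun a b =>
    ((a : ℕ) = 0 ∧ 1 ≤ (b : ℕ) ∧ (b : ℕ) ≤ s) ∨
    ((a : ℕ) = s ∧ s + 1 ≤ (b : ℕ) ∧ (b : ℕ) ≤ s + t - 1))

/-!
Call a vertex of degree `< s` deficient. If `x, y` are non-adjacent deficient vertices, the copy of
`S_{s,t}` in `G + xy` must use `xy` as a leaf edge at the centre `q ∈ {x, y}` of degree `s`, since
the other centre keeps degree `≥ t - 1 ≥ s` in `G`. So `q` is good: it has degree `s - 1` and a
neighbour `z` with `t - 1` neighbours outside `N[q]`. Hence the deficient vertices that are not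
good form a clique `K`.

Now discharge with `ε = s / (t + 2)`, every vertex starting with its degree: a vertex of degree
`> t` sends `1 - ε` to each deficient neighbour, one of degree `t` sends `(1 - ε) / 2`, and another
`(1 - ε) / 2` to a good vertex whose only neighbour of degree `≥ t` it is (by saturation there is at
most one such vertex). Afterwards every vertex outside `K` has charge `≥ s - ε` and every vertex of
`K` has charge `≥ |K| - 1`, so `2 e(G) ≥ |K| (|K| - 1) + (n - |K|) (s - ε)`, and minimising over
`|K|` gives the bound.
-/

namespace DoubleStarSaturation

section Degree

variable {V : Type*} [Finite V] {G : SimpleGraph V}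

lemma ncard_neighborSet_sdiff_add_ncard_le {z : V} {X Y : Set V}
    (hY : Y ⊆ G.neighborSet z) (hYX : Y ⊆ X) :
    (G.neighborSet z \ X).ncard + Y.ncard ≤ deg G z := by
  rw [← Set.ncard_union_eq (Set.disjoint_sdiff_left.mono_right hYX)]
  exact Set.ncard_le_ncard (Set.union_subset Set.sdiff_subset hY)

lemma ncard_neighborSet_sdiff_lt_deg {z v : V} {X : Set V} (hv : G.Adj z v) (hvX : v ∈ X) :
    (G.neighborSet z \ X).ncard < deg G z := by
  have := ncard_neighborSet_sdiff_add_ncard_le (Y := {v}) (by simpa using hv) (by simpa using hvX)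
  rw [Set.ncard_singleton] at this
  omega

lemma ncard_neighborSet_sdiff_add_two_le_deg {z a b : V} {X : Set V} (hab : a ≠ b)
    (ha : G.Adj z a) (hb : G.Adj z b) (haX : a ∈ X) (hbX : b ∈ X) :
    (G.neighborSet z \ X).ncard + 2 ≤ deg G z := by
  simpa [Set.ncard_pair hab] using ncard_neighborSet_sdiff_add_ncard_le (Y := {a, b})
    (Set.insert_subset ha (by simpa using hb)) (Set.insert_subset haX (by simpa using hbX))

lemma card_sub_one_le_deg_of_isClique {K : Finset V} (hK : G.IsClique (K : Set V)) {v : V}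
    (hv : v ∈ K) : K.card - 1 ≤ deg G v := by
  classical
  rw [← Finset.card_erase_of_mem hv, deg, ← Set.ncard_coe_finset]
  refine Set.ncard_le_ncard fun w hw => ?_
  rw [Finset.coe_erase, Set.mem_sdiff, Set.mem_singleton_iff] at hw
  exact hK hv hw.1 (Ne.symm hw.2)

end Degree

section Embedding

variable {α β : Type*} {G : SimpleGraph α} {H : SimpleGraph β}

lemma adj_of_sup_edge_adj {x y a b : α} (h : (G ⊔ fromEdgeSet {s(x, y)}).Adj a b)
    (hne : s(a, b) ≠ s(x, y)) : G.Adj a b := by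
  rcases h with h | h
  · exact h
  · exact absurd (by simpa using h.1) hne

lemma exists_copy_through_edge {x y : α} (hfree : ¬ ContainsCopy G H)
    (hcopy : ContainsCopy (G ⊔ fromEdgeSet {s(x, y)}) H) :
    ∃ f : β → α, Function.Injective f ∧ ∃ u v, H.Adj u v ∧ f u = x ∧ f v = y ∧
      ∀ a b, H.Adj a b → s(a, b) ≠ s(u, v) → G.Adj (f a) (f b) := by
  obtain ⟨f, hf, hadj⟩ := hcopy
  by_cases huv : ∃ u v, H.Adj u v ∧ f u = x ∧ f v = y
  · obtain ⟨u, v, huv, rfl, rfl⟩ := huv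
    refine ⟨f, hf, u, v, huv, rfl, rfl, fun a b hab hne => adj_of_sup_edge_adj (hadj hab) ?_⟩
    rwa [← Sym2.map_mk, ← Sym2.map_mk, (Sym2.map.injective hf).ne_iff]
  · refine absurd ⟨f, hf, fun a b hab => adj_of_sup_edge_adj (hadj hab) fun h => ?_⟩ hfree
    rcases Sym2.eq_iff.mp h with ⟨ha, hb⟩ | ⟨ha, hb⟩
    exacts [huv ⟨a, b, hab, ha, hb⟩, huv ⟨b, a, hab.symm, hb, ha⟩]

lemma deg_le_deg_add_one_of_embedding [Finite α] [Finite β] {f : β → α}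
    (hf : Function.Injective f) {c c' : β}
    (hc : ∀ w, H.Adj c w → w ≠ c' → G.Adj (f c) (f w)) :
    deg H c ≤ deg G (f c) + 1 := by
  have hsub : f '' (H.neighborSet c \ {c'}) ⊆ G.neighborSet (f c) := by
    rintro _ ⟨w, ⟨hw, hwc⟩, rfl⟩
    exact hc w hw hwc
  have := Set.ncard_le_ncard hsub
  rw [Set.ncard_image_of_injective _ hf] at this
  have := Set.pred_ncard_le_ncard_sdiff_singleton (H.neighborSet c) c'
  unfold deg
  omega

end Embedding

section DoubleStar

variable {s t : ℕ}

lemma doubleStar_adj_iff {a b : Fin (s + t)} :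
    (doubleStar s t).Adj a b ↔
      ((a : ℕ) = 0 ∧ 1 ≤ (b : ℕ) ∧ (b : ℕ) ≤ s) ∨
      ((b : ℕ) = 0 ∧ 1 ≤ (a : ℕ) ∧ (a : ℕ) ≤ s) ∨
      ((a : ℕ) = s ∧ s + 1 ≤ (b : ℕ) ∧ (b : ℕ) ≤ s + t - 1) ∨
      ((b : ℕ) = s ∧ s + 1 ≤ (a : ℕ) ∧ (a : ℕ) ≤ s + t - 1) := by
  rw [doubleStar, fromRel_adj, Ne, Fin.ext_iff]
  omega

lemma deg_doubleStar_of_val_eq_zero (hs : 0 < s) (ht : 0 < t) {c : Fin (s + t)}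
    (hc : (c : ℕ) = 0) : deg (doubleStar s t) c = s := by
  have : (doubleStar s t).neighborSet c = Fin.val ⁻¹' Set.Icc 1 s := by
    ext b
    simp only [mem_neighborSet, doubleStar_adj_iff, Set.mem_preimage, Set.mem_Icc]
    omega
  rw [deg, this, Set.ncard_preimage_of_injective_subset_range Fin.val_injective, Set.ncard_Icc_nat]
  · omega
  · rintro b ⟨-, hb⟩
    exact ⟨⟨b, by omega⟩, rfl⟩

lemma deg_doubleStar_of_val_eq (hs : 0 < s) {c : Fin (s + t)} (hc : (c : ℕ) = s) :
    deg (doubleStar s t) c = t := by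
  have : (doubleStar s t).neighborSet c =
      Fin.val ⁻¹' insert 0 (Set.Icc (s + 1) (s + t - 1)) := by
    ext b
    have := b.isLt
    simp only [mem_neighborSet, doubleStar_adj_iff, Set.mem_preimage, Set.mem_insert_iff,
      Set.mem_Icc]
    omega
  have hct := c.isLt
  rw [deg, this, Set.ncard_preimage_of_injective_subset_range Fin.val_injective,
    Set.ncard_insert_of_notMem (by simp), Set.ncard_Icc_nat]
  · omega
  · rintro b (rfl | ⟨-, hb⟩)
    exacts [⟨⟨0, by omega⟩, rfl⟩, ⟨⟨b, by omega⟩, rfl⟩]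

end DoubleStar

section Good

variable {V : Type*} (s t : ℕ) (G : SimpleGraph V)

/-- `v` and the witness `z` are the centres of an `S_{s,t}` that appears when `vp` is added. -/
def IsGoodAvoiding (v p : V) : Prop :=
  deg G v + 1 = s ∧ ∃ z, G.Adj v z ∧
    t - 1 ≤ (G.neighborSet z \ insert p (insert v (G.neighborSet v))).ncard

def IsGood (v : V) : Prop := IsGoodAvoiding s t G v v

variable {s t G}

lemma IsGoodAvoiding.isGood [Finite V] {v p : V} (h : IsGoodAvoiding s t G v p) :
    IsGood s t G v := by
  obtain ⟨hv, z, hz, hW⟩ := h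
  refine ⟨hv, z, hz, hW.trans (Set.ncard_le_ncard ?_)⟩
  rw [Set.insert_eq_of_mem (Set.mem_insert v _)]
  exact Set.sdiff_subset_sdiff_right (Set.subset_insert _ _)

end Good

section Extraction

variable {V : Type*} [Finite V] {s t : ℕ} {G : SimpleGraph V}

lemma isGoodAvoiding_of_copy_through_leaf_edge (hs : 0 < s) (ht : 0 < t)
    {f : Fin (s + t) → V} (hf : Function.Injective f) {c₀ c₁ ℓ : Fin (s + t)}
    (hc₀ : (c₀ : ℕ) = 0) (hc₁ : (c₁ : ℕ) = s)
    (hℓ : (doubleStar s t).Adj c₀ ℓ) (hℓc : ℓ ≠ c₁)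
    (hG : ∀ a b, (doubleStar s t).Adj a b → s(a, b) ≠ s(c₀, ℓ) → G.Adj (f a) (f b))
    (hdeg : deg G (f c₀) < s) :
    IsGoodAvoiding s t G (f c₀) (f ℓ) := by
  have hNq : f '' ((doubleStar s t).neighborSet c₀ \ {ℓ}) = G.neighborSet (f c₀) := by
    refine Set.eq_of_subset_of_ncard_le ?_ ?_
    · rintro _ ⟨w, ⟨hw, hwℓ⟩, rfl⟩
      exact hG c₀ w hw (fun h => hwℓ (Sym2.congr_right.mp h))
    · rw [Set.ncard_image_of_injective _ hf,
        Set.ncard_sdiff_singleton_of_mem (show ℓ ∈ _ from hℓ)]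
      have := deg_doubleStar_of_val_eq_zero hs ht hc₀
      unfold deg at hdeg this
      omega
  have hc₀₁ : (doubleStar s t).Adj c₀ c₁ := by rw [doubleStar_adj_iff]; omega
  refine ⟨?_, f c₁, hG c₀ c₁ hc₀₁ fun h => hℓc (Sym2.congr_right.mp h).symm, ?_⟩
  · rw [deg, ← hNq, Set.ncard_image_of_injective _ hf,
      Set.ncard_sdiff_singleton_of_mem (show ℓ ∈ _ from hℓ)]
    have := deg_doubleStar_of_val_eq_zero hs ht hc₀
    unfold deg at this
    omega
  calc t - 1 = ((doubleStar s t).neighborSet c₁ \ {c₀}).ncard := by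
        rw [Set.ncard_sdiff_singleton_of_mem (show c₀ ∈ _ from hc₀₁.symm), ← deg,
          deg_doubleStar_of_val_eq hs hc₁]
    _ = (f '' ((doubleStar s t).neighborSet c₁ \ {c₀})).ncard :=
        (Set.ncard_image_of_injective _ hf).symm
    _ ≤ _ := Set.ncard_le_ncard ?_
  rintro _ ⟨w, ⟨hw : (doubleStar s t).Adj c₁ w, hwc₀ : w ≠ c₀⟩, rfl⟩
  have hw₀ : ¬ (doubleStar s t).Adj c₀ w := by
    rw [Ne, Fin.ext_iff] at hwc₀
    rw [doubleStar_adj_iff] at hw ⊢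
    omega
  refine ⟨hG c₁ w hw fun h => ?_, ?_⟩
  · rcases Sym2.eq_iff.mp h with ⟨h₁, -⟩ | ⟨h₁, -⟩
    exacts [hc₀₁.ne h₁.symm, hℓc h₁.symm]
  · rw [← hNq, ← Set.image_insert_eq, ← Set.image_insert_eq, hf.mem_set_image]
    rintro (rfl | rfl | ⟨h, -⟩)
    exacts [hw₀ hℓ, hwc₀ rfl, hw₀ h]

theorem isGoodAvoiding_of_sup_edge (hs : 0 < s) (hst : s < t) {x y : V}
    (hfree : ¬ ContainsCopy G (doubleStar s t))
    (hcopy : ContainsCopy (G ⊔ fromEdgeSet {s(x, y)}) (doubleStar s t))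
    (hx : deg G x < s) (hy : deg G y < s) :
    IsGoodAvoiding s t G x y ∨ IsGoodAvoiding s t G y x := by
  obtain ⟨f, hf, u, v, huv, rfl, rfl, hG⟩ := exists_copy_through_edge hfree hcopy
  have hG' : ∀ a b, (doubleStar s t).Adj a b → s(a, b) ≠ s(v, u) → G.Adj (f a) (f b) := by
    simpa only [Sym2.eq_swap] using hG
  -- an endpoint of degree `t` in `S_{s,t}` would keep degree `≥ t - 1 ≥ s` in `G`
  have hcentre : ∀ c c', s(c, c') = s(u, v) → (c : ℕ) ≠ s := by
    intro c c' h hc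
    have := deg_le_deg_add_one_of_embedding hf (c := c) (c' := c') (G := G)
      fun w hw hwc' => hG _ _ hw fun h' => hwc' (Sym2.congr_right.mp (h'.trans h.symm))
    rw [deg_doubleStar_of_val_eq hs hc] at this
    rcases Sym2.eq_iff.mp h with ⟨rfl, -⟩ | ⟨rfl, -⟩ <;> omega
  obtain ⟨c₁, hc₁⟩ : ∃ c : Fin (s + t), (c : ℕ) = s := ⟨⟨s, by omega⟩, rfl⟩
  have hu := hcentre u v rfl
  have hv := hcentre v u Sym2.eq_swap
  rcases doubleStar_adj_iff.mp huv with h | h | h | h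
  · refine Or.inl
      (isGoodAvoiding_of_copy_through_leaf_edge hs (by omega) hf h.1 hc₁ huv ?_ hG hx)
    rintro rfl
    exact hv hc₁
  · refine Or.inr
      (isGoodAvoiding_of_copy_through_leaf_edge hs (by omega) hf h.1 hc₁ huv.symm ?_ hG' hy)
    rintro rfl
    exact hu hc₁
  exacts [(hu h.1).elim, (hv h.1).elim]

end Extraction

section Structure

variable {V : Type*} [Finite V] {s t : ℕ} {G : SimpleGraph V}

theorem adj_of_not_isGood (hG : IsSat G (doubleStar s t)) (hs : 0 < s) (hst : s < t)
    {x y : V} (hxy : x ≠ y) (hx : deg G x < s) (hy : deg G y < s)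
    (hgx : ¬ IsGood s t G x) (hgy : ¬ IsGood s t G y) : G.Adj x y := by
  by_contra hna
  rcases isGoodAvoiding_of_sup_edge hs hst hG.1 (hG.2 x y hxy hna) hx hy with h | h
  exacts [hgx h.isGood, hgy h.isGood]

variable (s t G) in
def IsSoleBigNeighbor (z v : V) : Prop :=
  IsGood s t G v ∧ G.Adj v z ∧ deg G z = t ∧ ∀ w, G.Adj v w → t ≤ deg G w → w = z

lemma IsSoleBigNeighbor.ncard_sdiff_lt {z a b z' : V} {X : Set V}
    (h : IsSoleBigNeighbor s t G z a) (hz' : G.Adj a z') (hb : G.Adj z b) (hab : a ≠ b)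
    (haX : a ∈ X) (hbX : b ∈ X) : (G.neighborSet z' \ X).ncard < t - 1 := by
  -- `z'` would be a neighbour of `a` of degree `≥ t`, hence `z`, whose neighbourhood has only
  -- `t - 2` vertices besides `a` and `b`
  obtain ⟨-, ha, hz, huniq⟩ := h
  by_contra! hW
  have := ncard_neighborSet_sdiff_lt_deg hz'.symm haX
  obtain rfl := huniq z' hz' (by omega)
  have := ncard_neighborSet_sdiff_add_two_le_deg hab ha.symm hb haX hbX
  omega

theorem eq_of_isSoleBigNeighbor (hG : IsSat G (doubleStar s t)) (hs : 0 < s)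
    (hst : s < t) {z v v' : V} (hv : IsSoleBigNeighbor s t G z v)
    (hv' : IsSoleBigNeighbor s t G z v') : v = v' := by
  by_contra hne
  have hnadj : ¬ G.Adj v v' := by
    intro hvv'
    obtain ⟨-, z', hz', hW⟩ := hv.1
    exact (hv.ncard_sdiff_lt hz' hv'.2.1.symm hne (by simp) (by simp [hvv'])).not_ge hW
  have hdeg : ∀ {a}, IsSoleBigNeighbor s t G z a → deg G a < s := fun h => by
    have := h.1.1
    omega
  rcases isGoodAvoiding_of_sup_edge hs hst hG.1 (hG.2 v v' hne hnadj) (hdeg hv) (hdeg hv') with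
    ⟨-, z', hz', hW⟩ | ⟨-, z', hz', hW⟩
  · exact (hv.ncard_sdiff_lt hz' hv'.2.1.symm hne (by simp) (by simp)).not_ge hW
  · exact (hv'.ncard_sdiff_lt hz' hv.2.1.symm (Ne.symm hne) (by simp) (by simp)).not_ge hW

end Structure

lemma sum_le_sum_of_discharging {V M : Type*} [Fintype V] [AddCommGroup M] [PartialOrder M]
    [IsOrderedAddMonoid M] (b c : V → M) (T : V → V → M)
    (h : ∀ v, b v ≤ c v + ∑ z, T z v - ∑ w, T v w) : ∑ v, b v ≤ ∑ v, c v := by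
  calc ∑ v, b v ≤ ∑ v, (c v + ∑ z, T z v - ∑ w, T v w) := Finset.sum_le_sum fun v _ => h v
    _ = ∑ v, c v := by
      rw [Finset.sum_sub_distrib, Finset.sum_add_distrib, Finset.sum_comm, add_sub_cancel_right]

lemma quadratic_le (k N s ε : ℝ) (hε : ε ≤ 1) (hs : 1 - ε ≤ 2 * s) :
    (s - ε) * N - (s * (1 - ε) + s ^ 2 / 4) ≤ k * (k - 1) + (N - k) * (s - ε) := by
  nlinarith [sq_nonneg (2 * k - (s + 1 - ε)), mul_nonneg (sub_nonneg.mpr hε) (sub_nonneg.mpr hs)]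

section Tokens

open Classical

variable {V : Type*} [Fintype V] {s t : ℕ} {G : SimpleGraph V} {z v : V}

lemma deg_eq_card_filter_adj (G : SimpleGraph V) (v : V) :
    deg G v = (Finset.univ.filter (G.Adj v)).card := by
  rw [deg, ← Set.ncard_coe_finset]
  congr
  ext
  simp

lemma sum_ite_adj (G : SimpleGraph V) (z : V) (c : ℕ) :
    ∑ v, (if G.Adj z v then c else 0) = c * deg G z := by
  rw [Finset.sum_ite, Finset.sum_const_zero, add_zero, Finset.sum_const, smul_eq_mul,
    deg_eq_card_filter_adj, mul_comm]

variable (s t G) in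
/-- The charge `z` sends to `v`, in units of `(1 - ε) / 2`. -/
noncomputable def tokens (z v : V) : ℕ :=
  (if G.Adj z v ∧ deg G v < s then (if t < deg G z then 2 else if deg G z = t then 1 else 0)
    else 0) + if IsSoleBigNeighbor s t G z v then 1 else 0

lemma sum_tokens_eq_zero (hz : deg G z < t) : ∑ v, tokens s t G z v = 0 := by
  refine Finset.sum_eq_zero fun v _ => ?_
  have : ¬ IsSoleBigNeighbor s t G z v := fun h => by have := h.2.2.1; omega
  simp [tokens, this, hz.ne, not_lt_of_gt hz]

lemma sum_tokens_le_two_mul_deg (hz : t < deg G z) : ∑ v, tokens s t G z v ≤ 2 * deg G z := by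
  rw [← sum_ite_adj]
  refine Finset.sum_le_sum fun v _ => ?_
  have : ¬ IsSoleBigNeighbor s t G z v := fun h => by have := h.2.2.1; omega
  simp only [tokens, this, if_false, add_zero]
  split_ifs <;> simp_all

lemma sum_tokens_le_of_deg_eq (hG : IsSat G (doubleStar s t)) (hs : 0 < s) (hst : s < t)
    (hz : deg G z = t) : ∑ v, tokens s t G z v ≤ t + 1 := by
  have hdeg : ∑ v, (if G.Adj z v ∧ deg G v < s then (if t < deg G z then 2 else
      if deg G z = t then 1 else 0) else 0) ≤ t := by
    rw [← hz, ← one_mul (deg G z), ← sum_ite_adj]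
    refine Finset.sum_le_sum fun v _ => ?_
    split_ifs <;> simp_all
  have hsole : ∑ v, (if IsSoleBigNeighbor s t G z v then 1 else 0) ≤ 1 := by
    rw [Finset.sum_boole, Nat.cast_id, Finset.card_le_one]
    intro a ha b hb
    exact eq_of_isSoleBigNeighbor hG hs hst (Finset.mem_filter.mp ha).2 (Finset.mem_filter.mp hb).2
  simpa only [tokens, Finset.sum_add_distrib] using add_le_add hdeg hsole

lemma IsGood.two_le_sum_tokens (hv : IsGood s t G v) : 2 ≤ ∑ z, tokens s t G z v := by
  have hdeg : deg G v < s := by have := hv.1; omega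
  have hle : ∀ z, tokens s t G z v ≤ ∑ z, tokens s t G z v := fun z =>
    Finset.single_le_sum (f := fun z => tokens s t G z v) (fun _ _ => Nat.zero_le _)
      (Finset.mem_univ z)
  by_cases hbig : ∃ z, G.Adj v z ∧ t < deg G z
  · obtain ⟨z, hz, hzt⟩ := hbig
    refine le_trans ?_ (hle z)
    simp [tokens, hz.symm, hdeg, hzt]
  by_cases htwo :
      ∃ z₁ z₂, z₁ ≠ z₂ ∧ G.Adj v z₁ ∧ G.Adj v z₂ ∧ deg G z₁ = t ∧ deg G z₂ = t
  · obtain ⟨z₁, z₂, hne, hz₁, hz₂, hd₁, hd₂⟩ := htwo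
    have hone : ∀ z, G.Adj v z → deg G z = t → 1 ≤ tokens s t G z v := fun z hz hd => by
      simp [tokens, hz.symm, hdeg, hd]
    calc 2 ≤ tokens s t G z₁ v + tokens s t G z₂ v :=
          add_le_add (hone z₁ hz₁ hd₁) (hone z₂ hz₂ hd₂)
      _ = ∑ z ∈ {z₁, z₂}, tokens s t G z v := by rw [Finset.sum_pair hne]
      _ ≤ ∑ z, tokens s t G z v := Finset.sum_le_sum_of_subset (Finset.subset_univ _)
  push Not at hbig htwo
  obtain ⟨-, z, hz, hW⟩ := id hv
  have hzt : deg G z = t := by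
    have := ncard_neighborSet_sdiff_lt_deg hz.symm (Set.mem_insert v (insert v (G.neighborSet v)))
    have := hbig z hz
    omega
  have hsole : IsSoleBigNeighbor s t G z v := by
    refine ⟨hv, hz, hzt, fun w hw hwt => ?_⟩
    by_contra hwz
    exact htwo w z hwz hw hz (by have := hbig w hw; omega) hzt
  refine le_trans ?_ (hle z)
  simp [tokens, hz.symm, hdeg, hzt, hsole]

end Tokens

section Counting

variable {V : Type*} [Fintype V] {s t : ℕ} {G : SimpleGraph V} {ε : ℝ}

lemma mem_Icc_of_mul_add_two_eq (hst : s ≤ t) (hε : ε * (t + 2) = s) : ε ∈ Set.Icc 0 1 := by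
  have hst' : (s : ℝ) ≤ t := by exact_mod_cast hst
  constructor <;> nlinarith [(Nat.cast_nonneg s : (0 : ℝ) ≤ s)]

lemma sub_le_charge (hG : IsSat G (doubleStar s t)) (hs : 0 < s) (hst : s < t)
    (hε : ε * (t + 2) = s) {v : V} (hv : deg G v < s → IsGood s t G v) :
    (s : ℝ) - ε ≤ deg G v + (1 - ε) / 2 * ((∑ z, tokens s t G z v : ℕ) : ℝ) -
      (1 - ε) / 2 * ((∑ w, tokens s t G v w : ℕ) : ℝ) := by
  have hst' : (s : ℝ) + 1 ≤ t := by exact_mod_cast hst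
  obtain ⟨hε0, hε1⟩ := mem_Icc_of_mul_add_two_eq hst.le hε
  have hδ : 0 ≤ (1 - ε) / 2 := by linarith
  rcases lt_or_ge (deg G v) s with hlow | hlow
  · have hgood := hv hlow
    have hdeg : (deg G v : ℝ) + 1 = s := by exact_mod_cast hgood.1
    have htwo : (2 : ℝ) ≤ ((∑ z, tokens s t G z v : ℕ) : ℝ) := by
      exact_mod_cast hgood.two_le_sum_tokens
    rw [sum_tokens_eq_zero (by omega), Nat.cast_zero, mul_zero, sub_zero]
    nlinarith [mul_le_mul_of_nonneg_left htwo hδ]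
  have hlow' : (s : ℝ) ≤ deg G v := by exact_mod_cast hlow
  have hin := mul_nonneg hδ (Nat.cast_nonneg (α := ℝ) (∑ z, tokens s t G z v))
  rcases lt_trichotomy (deg G v) t with hlt | heq | hgt
  · rw [sum_tokens_eq_zero hlt, Nat.cast_zero, mul_zero, sub_zero]
    linarith
  · have hout : ((∑ w, tokens s t G v w : ℕ) : ℝ) ≤ t + 1 := by
      exact_mod_cast sum_tokens_le_of_deg_eq hG hs hst heq
    have hdeg : (deg G v : ℝ) = t := by exact_mod_cast heq
    nlinarith [mul_le_mul_of_nonneg_left hout hδ]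
  · have hout : ((∑ w, tokens s t G v w : ℕ) : ℝ) ≤ 2 * deg G v := by
      exact_mod_cast sum_tokens_le_two_mul_deg hgt
    have hdeg : (t : ℝ) + 1 ≤ deg G v := by exact_mod_cast hgt
    nlinarith [mul_le_mul_of_nonneg_left hout hδ, mul_le_mul_of_nonneg_left hdeg hε0]

lemma deg_le_charge (hst : s < t) (hε : ε * (t + 2) = s) {v : V} (hv : deg G v < s) :
    (deg G v : ℝ) ≤ deg G v + (1 - ε) / 2 * ((∑ z, tokens s t G z v : ℕ) : ℝ) -
      (1 - ε) / 2 * ((∑ w, tokens s t G v w : ℕ) : ℝ) := by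
  have hδ : 0 ≤ (1 - ε) / 2 := by linarith [(mem_Icc_of_mul_add_two_eq hst.le hε).2]
  rw [sum_tokens_eq_zero (by omega), Nat.cast_zero, mul_zero, sub_zero]
  linarith [mul_nonneg hδ (Nat.cast_nonneg (α := ℝ) (∑ z, tokens s t G z v))]

theorem sub_mul_card_sub_le_sum_deg (hG : IsSat G (doubleStar s t)) (hs : 0 < s) (hst : s < t)
    (hε : ε * (t + 2) = s) :
    (s - ε) * Fintype.card V - (s * (1 - ε) + s ^ 2 / 4) ≤ ∑ v, (deg G v : ℝ) := by
  classical
  set K := Finset.univ.filter fun v => deg G v < s ∧ ¬ IsGood s t G v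
  have hK : G.IsClique (K : Set V) := fun x hx y hy hxy => by
    simp only [K, Finset.coe_filter, Finset.mem_univ, true_and, Set.mem_ofPred_eq] at hx hy
    exact adj_of_not_isGood hG hs hst hxy hx.1 hy.1 hx.2 hy.2
  have hcharge :
      ∑ v, (if v ∈ K then (K.card : ℝ) - 1 else s - ε) ≤ ∑ v, (deg G v : ℝ) := by
    refine sum_le_sum_of_discharging _ _ (fun z v => (1 - ε) / 2 * tokens s t G z v) fun v => ?_
    simp only [← Finset.mul_sum, ← Nat.cast_sum]
    split_ifs with hv
    · refine le_trans ?_ (deg_le_charge hst hε (Finset.mem_filter.mp hv).2.1)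
      rw [← Nat.cast_pred (Finset.card_pos.mpr ⟨v, hv⟩)]
      exact_mod_cast card_sub_one_le_deg_of_isClique hK hv
    · refine sub_le_charge hG hs hst hε fun hlow => ?_
      by_contra hgood
      exact hv (by simp [K, hlow, hgood])
  have hsum : ∑ v, (if v ∈ K then (K.card : ℝ) - 1 else s - ε) =
      K.card * (K.card - 1) + (Fintype.card V - K.card) * (s - ε) := by
    rw [Finset.sum_ite, Finset.sum_const, Finset.sum_const, Finset.filter_mem_eq_inter,
      Finset.univ_inter, Finset.filter_not, Finset.filter_mem_eq_inter, Finset.univ_inter,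
      ← Finset.compl_eq_univ_sdiff, Finset.card_compl, nsmul_eq_mul, nsmul_eq_mul,
      Nat.cast_sub (Finset.card_le_univ K)]
  have hs' : (1 : ℝ) ≤ s := by exact_mod_cast hs
  obtain ⟨hε0, hε1⟩ := mem_Icc_of_mul_add_two_eq hst.le hε
  linarith [quadratic_le K.card (Fintype.card V) s ε hε1 (by linarith)]

lemma sum_deg_eq_two_mul_ncard_edgeSet (G : SimpleGraph V) :
    ∑ v, deg G v = 2 * G.edgeSet.ncard := by
  classical
  simp_rw [deg, Set.ncard_eq_toFinset_card', Set.toFinset_card, card_neighborSet_eq_degree]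
  rw [sum_degrees_eq_twice_card_edges, edgeFinset_card]

end Counting

end DoubleStarSaturation

theorem stmt15_general (s t : ℕ) (hs : 0 < s) (hst : s < t)
    (n : ℕ)
    (G : SimpleGraph (Fin n)) (hG : IsSat G (doubleStar s t)) :
    ((s : ℝ) * ((t : ℝ) + 1) / ((t : ℝ) + 2)) * n / 2 -
      ((s : ℝ) * ((t : ℝ) - (s : ℝ) + 2) / (2 * (t : ℝ) + 4) + (s : ℝ) ^ 2 / 8) ≤
      (G.edgeSet.ncard : ℝ) := by
  have ht : (0 : ℝ) < t + 2 := by positivity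
  have hcount := DoubleStarSaturation.sub_mul_card_sub_le_sum_deg hG hs hst
    (div_mul_cancel₀ (s : ℝ) ht.ne')
  have hsum : ∑ v, (deg G v : ℝ) = 2 * G.edgeSet.ncard := by
    exact_mod_cast DoubleStarSaturation.sum_deg_eq_two_mul_ncard_edgeSet G
  rw [Fintype.card_fin, hsum] at hcount
  have hτ : (s : ℝ) * (t + 1) / (t + 2) = s - s / (t + 2) := by field_simp; ring
  have hc : 2 * ((s : ℝ) * (t - s + 2) / (2 * t + 4) + s ^ 2 / 8) =
      s * (1 - s / (t + 2)) + s ^ 2 / 4 := by field_simp; ring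
  rw [hτ]
  linarith

/-- Theorem (double star, lower bound): for `s < t` and
`n ≥ q(2t + 4) + s` with `q = max 1 (⌊s/2⌋ - 1)`,
`sat(n, S_{s,t}) ≥ (s(t + 1)/(t + 2)) * n/2 - c1`. -/
theorem stmt15 (s t : ℕ) (hs : 0 < s) (hst : s < t)
    (n : ℕ) (hn : max 1 (s / 2 - 1) * (2 * t + 4) + s ≤ n)
    (G : SimpleGraph (Fin n)) (hG : IsSat G (doubleStar s t)) :
    ((s : ℝ) * ((t : ℝ) + 1) / ((t : ℝ) + 2)) * n / 2 -
      ((s : ℝ) * ((t : ℝ) - (s : ℝ) + 2) / (2 * (t : ℝ) + 4) + (s : ℝ) ^ 2 / 8) ≤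
      (G.edgeSet.ncard : ℝ) :=
  stmt15_general s t hs hst n G hG
end
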